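/- arXiv:1112.1831 — 9 statements merged into one kernel-verified Lean document; each statement's English description precedes it below -/
import Mathlib

section
/- Let G be a simple graph on a finite vertex set, ε ∈ (0,1], and C a clique (any two distinct vertices of C are adjacent) with ε·|C| ≥ 8. Let V′ be a finite set of vertices with C ⊆ V′, |V′ \ C| ≤ (ε/4)|C|, and such that every u ∈ V′ \ C satisfies |Γ(u) ∩ C| ≤ (1−ε)|C|. Then {w ∈ V′ : |Γ(w) ∩ V′| ≥ (1−ε/2)|V′|} = C. -/
/-!
A vertex `w` of the clique `C` has at least `|C| - 1` neighbours in `V'`, and since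
`|V' \ C| ≤ ε|C|/4` the threshold `(1 - ε/2)|V'|` is at most `|C| - ε|C|/4 ≤ |C| - 2`.
A vertex `u ∈ V' \ C` has at most `(1 - ε)|C| + |V' \ C|` neighbours in `V'`, which falls
short of the threshold by `ε(|C| - |V' \ C|)/2 > 0`.
-/

open Finset

theorem Finset.card_inter_le_card_inter_add_card_sdiff {α : Type*} [DecidableEq α]
    (s t u : Finset α) : #(s ∩ t) ≤ #(s ∩ u) + #(t \ u) := by
  calc #(s ∩ t) ≤ #(s ∩ u ∪ t \ u) := card_le_card fun x hx => by
        simp only [mem_inter, mem_union, mem_sdiff] at hx ⊢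
        tauto
    _ ≤ #(s ∩ u) + #(t \ u) := card_union_le _ _

theorem SimpleGraph.IsClique.card_le_card_neighborFinset_inter_add_one {V : Type*}
    [DecidableEq V] {G : SimpleGraph V} {C s : Finset V} {w : V} [Fintype (G.neighborSet w)]
    (hC : G.IsClique (C : Set V)) (hCs : C ⊆ s) (hw : w ∈ C) :
    #C ≤ #(G.neighborFinset w ∩ s) + 1 := by
  have herase : C.erase w ⊆ G.neighborFinset w ∩ s := fun x hx => by
    obtain ⟨hxw, hxC⟩ := mem_erase.1 hx
    exact mem_inter.2 ⟨(G.mem_neighborFinset w x).2 (hC hw hxC hxw.symm), hCs hxC⟩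
  have := card_le_card herase
  rw [card_erase_of_mem hw] at this
  omega

/-- Degree-based trimming recovers a clique exactly: if `C ⊆ V′`, the extra part of `V′` is
small and each extra vertex misses an `ε` fraction of `C`, then the vertices of `V′` with
degree at least `(1-ε/2)|V′|` inside `V′` are exactly `C`. -/
theorem clique_trim_eq {V : Type*} [Fintype V] [DecidableEq V]
    (G : SimpleGraph V) [DecidableRel G.Adj]
    (ε : ℝ) (hε0 : 0 < ε) (hε1 : ε ≤ 1)
    (C : Finset V) (hclique : ∀ x ∈ C, ∀ y ∈ C, x ≠ y → G.Adj x y)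
    (hsize : (8 : ℝ) ≤ ε * C.card)
    (V' : Finset V) (hCV' : C ⊆ V')
    (hdiff : (((V' \ C).card : ℝ)) ≤ (ε / 4) * C.card)
    (hgap : ∀ u ∈ V' \ C, ((G.neighborFinset u ∩ C).card : ℝ) ≤ (1 - ε) * C.card) :
    V'.filter (fun w => (1 - ε / 2) * V'.card ≤ ((G.neighborFinset w ∩ V').card : ℝ)) = C := by
  have hC : G.IsClique (C : Set V) := fun x hx y hy hxy => hclique x hx y hy hxy
  have hcard : (#V' : ℝ) = #C + #(V' \ C) := by
    rw [← card_sdiff_add_card_eq_card hCV']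
    push_cast
    ring
  have hm : (0 : ℝ) ≤ #(V' \ C) := Nat.cast_nonneg _
  have hεC : ε * #C ≤ #C := mul_le_of_le_one_left (Nat.cast_nonneg _) hε1
  have hmC : (#(V' \ C) : ℝ) < #C := by linarith
  ext w
  rw [mem_filter]
  constructor
  · rintro ⟨hwV', hdeg⟩
    by_contra hwC
    have hneighbors : (#(G.neighborFinset w ∩ V') : ℝ) ≤ #(G.neighborFinset w ∩ C) + #(V' \ C) :=
      mod_cast card_inter_le_card_inter_add_card_sdiff _ _ _
    have hgapw := hgap w (mem_sdiff.2 ⟨hwV', hwC⟩)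
    have hcm : 0 < ε * (#C - #(V' \ C)) := mul_pos hε0 (sub_pos.2 hmC)
    have : (#(G.neighborFinset w ∩ V') : ℝ) < (1 - ε / 2) * #V' := by
      calc (#(G.neighborFinset w ∩ V') : ℝ) ≤ (1 - ε) * #C + #(V' \ C) := by linarith
        _ < (1 - ε / 2) * (#C + #(V' \ C)) := by linarith
        _ = (1 - ε / 2) * #V' := by rw [hcard]
    linarith
  · intro hwC
    refine ⟨hCV' hwC, ?_⟩
    have hneighbors : (#C : ℝ) ≤ #(G.neighborFinset w ∩ V') + 1 :=
      mod_cast hC.card_le_card_neighborFinset_inter_add_one hCV' hwC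
    have hεm : 0 ≤ ε * #(V' \ C) := mul_nonneg hε0.le hm
    calc (1 - ε / 2) * #V' = (1 - ε / 2) * (#C + #(V' \ C)) := by rw [hcard]
      _ ≤ #C - ε * #C / 4 := by linarith
      _ ≤ #(G.neighborFinset w ∩ V') := by linarith
end

section
/- Let G be a simple graph on a finite vertex set of size n, ε ∈ (0,1), and C a nonempty clique such that every vertex u ∉ C satisfies |Γ(u) ∩ C| ≤ (1−ε)|C|. Let T be a natural number with T ≤ |C| and T ≥ (ln n)/ε. Then there exists a subset S ⊆ C with |S| = T such that C = {v : every s ∈ S with s ≠ v is adjacent to v}. -/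
/-!
Build the witness greedily inside `C`, tracking the vertices outside `C` that are still adjacent
to the whole witness. Each of them misses at least an `ε`-fraction of `C`, so by double counting
some vertex of `C` is adjacent to at most a `(1 - ε)`-fraction of them; adding it shrinks the
survivors by a factor `1 - ε ≤ e^{-ε}`. After `T ≥ (ln n)/ε` steps at most
`e^{-εT} (n - |C|) < e^{-εT} n ≤ 1` survivors remain, so none does, and then the clique `C` is
exactly the common neighbourhood of the witness. Padding the witness to size `T` inside `C` only
removes survivors.
-/

open Finset Real SimpleGraph

lemma Real.exp_neg_mul_lt_one_of_log_le {m n : ℕ} {x : ℝ} (hmn : m < n) (hx : log n ≤ x) :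
    exp (-x) * m < 1 := by
  have hn : (0 : ℝ) < n := Nat.cast_pos.2 (Nat.zero_lt_of_lt hmn)
  have hexp : exp (-x) ≤ (n : ℝ)⁻¹ := by
    rw [← exp_log hn, ← exp_neg]
    exact exp_le_exp.2 (neg_le_neg hx)
  calc exp (-x) * m ≤ (n : ℝ)⁻¹ * m := by gcongr
    _ < 1 := by rw [inv_mul_lt_one₀ hn]; exact_mod_cast hmn

namespace SimpleGraph

variable {V : Type*} [Fintype V] [DecidableEq V] (G : SimpleGraph V) [DecidableRel G.Adj]

def commonNeighborsOutside (C S : Finset V) : Finset V :=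
  {u ∈ univ \ C | ∀ s ∈ S, G.Adj s u}

variable {G}

lemma commonNeighborsOutside_empty (C : Finset V) :
    G.commonNeighborsOutside C ∅ = univ \ C := by
  simp [commonNeighborsOutside]

lemma commonNeighborsOutside_insert (C S : Finset V) (s : V) :
    G.commonNeighborsOutside C (insert s S) = {u ∈ G.commonNeighborsOutside C S | G.Adj s u} := by
  ext u
  simp only [commonNeighborsOutside, mem_filter, mem_insert, forall_eq_or_imp]
  tauto

lemma commonNeighborsOutside_anti {C S S' : Finset V} (h : S ⊆ S') :
    G.commonNeighborsOutside C S' ⊆ G.commonNeighborsOutside C S := by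
  intro u hu
  simp only [commonNeighborsOutside, mem_filter] at hu ⊢
  exact ⟨hu.1, fun s hs => hu.2 s (h hs)⟩

lemma exists_mem_card_filter_adj_le {B C : Finset V} (hC : C.Nonempty) {δ : ℝ}
    (hB : ∀ u ∈ B, (#(G.neighborFinset u ∩ C) : ℝ) ≤ δ * #C) :
    ∃ s ∈ C, (#{u ∈ B | G.Adj s u} : ℝ) ≤ δ * #B := by
  refine exists_le_of_sum_le hC ?_
  have hbelow (u : V) : C.bipartiteBelow G.Adj u = G.neighborFinset u ∩ C := by
    ext s
    simp [bipartiteBelow, adj_comm, and_comm]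
  calc ∑ s ∈ C, (#{u ∈ B | G.Adj s u} : ℝ)
      = ∑ u ∈ B, (#(G.neighborFinset u ∩ C) : ℝ) := by
        simp_rw [← hbelow]
        exact_mod_cast sum_card_bipartiteAbove_eq_sum_card_bipartiteBelow G.Adj
    _ ≤ ∑ _u ∈ B, δ * #C := sum_le_sum hB
    _ = ∑ _s ∈ C, δ * #B := by simp only [sum_const, nsmul_eq_mul]; ring

lemma exists_subset_card_le_card_commonNeighborsOutside_le {C : Finset V} (hC : C.Nonempty)
    {ε : ℝ} (hgap : ∀ u, u ∉ C → (#(G.neighborFinset u ∩ C) : ℝ) ≤ (1 - ε) * #C) (k : ℕ) :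
    ∃ S ⊆ C, #S ≤ k ∧
      (#(G.commonNeighborsOutside C S) : ℝ) ≤ exp (-(ε * k)) * #(univ \ C) := by
  induction k with
  | zero => exact ⟨∅, empty_subset _, le_rfl, by simp [commonNeighborsOutside_empty]⟩
  | succ k ih =>
    obtain ⟨S, hSC, hSk, hbound⟩ := ih
    obtain ⟨s, hs, hfew⟩ := exists_mem_card_filter_adj_le (B := G.commonNeighborsOutside C S) hC
      fun u hu => hgap u (mem_sdiff.1 (mem_filter.1 hu).1).2
    refine ⟨insert s S, insert_subset hs hSC, (card_insert_le s S).trans (by omega), ?_⟩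
    rw [commonNeighborsOutside_insert]
    calc _ ≤ (1 - ε) * #(G.commonNeighborsOutside C S) := hfew
      _ ≤ exp (-ε) * #(G.commonNeighborsOutside C S) := by
          gcongr
          linarith [add_one_le_exp (-ε)]
      _ ≤ exp (-ε) * (exp (-(ε * k)) * #(univ \ C)) := by gcongr
      _ = exp (-(ε * ↑(k + 1))) * #(univ \ C) := by
          rw [← mul_assoc, ← exp_add]
          push_cast
          ring_nf

lemma eq_filter_of_commonNeighborsOutside_eq_empty {C S : Finset V} (hC : G.IsClique (C : Set V))
    (hSC : S ⊆ C) (hS : G.commonNeighborsOutside C S = ∅) :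
    C = univ.filter fun v => ∀ s ∈ S, s ≠ v → G.Adj s v := by
  ext v
  simp only [mem_filter, mem_univ, true_and]
  refine ⟨fun hv s hs hsv => hC (hSC hs) hv hsv, fun hv => ?_⟩
  by_contra hvC
  have : v ∈ G.commonNeighborsOutside C S := by
    simp only [commonNeighborsOutside, mem_filter, mem_sdiff, mem_univ, true_and]
    exact ⟨hvC, fun s hs => hv s hs fun h => hvC (h ▸ hSC hs)⟩
  simp [hS] at this

end SimpleGraph

theorem clique_identified_by_witness_general {V : Type*} [Fintype V] [DecidableEq V]
    (G : SimpleGraph V) [DecidableRel G.Adj]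
    (ε : ℝ) (hε0 : 0 < ε)
    (C : Finset V) (hCne : C.Nonempty)
    (hclique : ∀ x ∈ C, ∀ y ∈ C, x ≠ y → G.Adj x y)
    (hgap : ∀ u, u ∉ C → ((G.neighborFinset u ∩ C).card : ℝ) ≤ (1 - ε) * C.card)
    (T : ℕ) (hT1 : T ≤ C.card)
    (hT2 : Real.log (Fintype.card V) / ε ≤ (T : ℝ)) :
    ∃ S ⊆ C, S.card = T ∧
      C = Finset.univ.filter (fun v => ∀ s ∈ S, s ≠ v → G.Adj s v) := by
  obtain ⟨S₀, hS₀C, hS₀T, hS₀⟩ :=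
    exists_subset_card_le_card_commonNeighborsOutside_le hCne hgap T
  obtain ⟨S, hS₀S, hSC, hST⟩ := exists_subsuperset_card_eq hS₀C hS₀T hT1
  have hlog : log (Fintype.card V) ≤ ε * T := by rwa [div_le_iff₀ hε0, mul_comm] at hT2
  have hout : #(univ \ C) < Fintype.card V :=
    (card_lt_card (sdiff_ssubset (subset_univ C) hCne)).trans_eq card_univ
  have hfew : (#(G.commonNeighborsOutside C S) : ℝ) < 1 := calc
    _ ≤ (#(G.commonNeighborsOutside C S₀) : ℝ) := by
        exact_mod_cast card_le_card (commonNeighborsOutside_anti hS₀S)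
    _ ≤ _ := hS₀
    _ < 1 := exp_neg_mul_lt_one_of_log_le hout hlog
  refine ⟨S, hSC, hST, eq_filter_of_commonNeighborsOutside_eq_empty hclique hSC ?_⟩
  exact card_eq_zero.1 (Nat.lt_one_iff.1 (by exact_mod_cast hfew))

/-- A clique `C` satisfying the gap condition is exactly determined by the common
neighborhood of some witness subset `S ⊆ C` of size `T`, provided `T ≥ (ln n)/ε`. -/
theorem clique_identified_by_witness {V : Type*} [Fintype V] [DecidableEq V]
    (G : SimpleGraph V) [DecidableRel G.Adj]
    (ε : ℝ) (hε0 : 0 < ε) (hε1 : ε < 1)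
    (C : Finset V) (hCne : C.Nonempty)
    (hclique : ∀ x ∈ C, ∀ y ∈ C, x ≠ y → G.Adj x y)
    (hgap : ∀ u, u ∉ C → ((G.neighborFinset u ∩ C).card : ℝ) ≤ (1 - ε) * C.card)
    (T : ℕ) (hT1 : T ≤ C.card)
    (hT2 : Real.log (Fintype.card V) / ε ≤ (T : ℝ)) :
    ∃ S ⊆ C, S.card = T ∧
      C = Finset.univ.filter (fun v => ∀ s ∈ S, s ≠ v → G.Adj s v) :=
  clique_identified_by_witness_general G ε hε0 C hCne hclique hgap T hT1 hT2
end

section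
/- Let G be a simple graph on a finite vertex set, and let α, ε be reals with 0 < ε ≤ α ≤ 1. Let C be a nonempty finite set of vertices such that every v ∈ C satisfies |Γ(v) ∩ C| ≥ α|C| and every v ∉ C satisfies |Γ(v) ∩ C| ≤ (α−ε/2)|C|. Let S be a nonempty subset of C such that for every vertex v, | |Γ(v) ∩ S|/|S| − |Γ(v) ∩ C|/|C| | ≤ ε/8. Then {v : |Γ(v) ∩ S| ≥ (α−ε/4)|S|} = C. -/
open Finset

/-- Deterministic threshold-recovery: if the edge-fraction of every vertex into a sample
`S ⊆ C` is within `ε/8` of its edge-fraction into `C`, then thresholding at `α - ε/4`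
recovers `C` exactly. -/
theorem dense_threshold_recovery {V : Type*} [Fintype V] [DecidableEq V]
    (G : SimpleGraph V) [DecidableRel G.Adj]
    (α ε : ℝ) (hε0 : 0 < ε) (hεα : ε ≤ α) (hα : α ≤ 1)
    (C : Finset V) (hCne : C.Nonempty)
    (hin : ∀ v ∈ C, α * C.card ≤ ((G.neighborFinset v ∩ C).card : ℝ))
    (hout : ∀ v, v ∉ C → ((G.neighborFinset v ∩ C).card : ℝ) ≤ (α - ε / 2) * C.card)
    (S : Finset V) (hSC : S ⊆ C) (hSne : S.Nonempty)
    (hconc : ∀ v, |((G.neighborFinset v ∩ S).card : ℝ) / S.card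
        - ((G.neighborFinset v ∩ C).card : ℝ) / C.card| ≤ ε / 8) :
    Finset.univ.filter
        (fun v => (α - ε / 4) * S.card ≤ ((G.neighborFinset v ∩ S).card : ℝ)) = C := by

  have hS0 : (0:ℝ) < S.card := by exact_mod_cast Finset.card_pos.mpr hSne
  have hC0 : (0:ℝ) < C.card := by exact_mod_cast Finset.card_pos.mpr hCne
  ext v
  simp only [Finset.mem_filter, Finset.mem_univ, true_and]
  have hc := hconc v
  rw [abs_le] at hc
  constructor
  · intro hv
    by_contra hvC
    have h1 : ((G.neighborFinset v ∩ S).card : ℝ) / S.card ≤ (α - ε/2) + ε/8 := by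
      have := hout v hvC
      have h2 : ((G.neighborFinset v ∩ C).card : ℝ) / C.card ≤ α - ε/2 := by
        rw [div_le_iff₀ hC0]; linarith
      linarith [hc.2]
    have h3 : (α - ε/4) ≤ ((G.neighborFinset v ∩ S).card : ℝ) / S.card := by
      rw [le_div_iff₀ hS0]; linarith
    linarith
  · intro hv
    have h2 : α ≤ ((G.neighborFinset v ∩ C).card : ℝ) / C.card := by
      rw [le_div_iff₀ hC0]; exact hin v hv
    have h3 : α - ε/8 ≤ ((G.neighborFinset v ∩ S).card : ℝ) / S.card := by
      linarith [hc.1]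
    rw [← le_div_iff₀ hS0]
    linarith
end

section
/- Let G be a simple graph on a finite vertex set of size n, and let α, ε be reals with 0 < ε ≤ α ≤ 1. Let C be a finite set of vertices such that every v ∈ C satisfies |Γ(v) ∩ C| ≥ α|C| and every v ∉ C satisfies |Γ(v) ∩ C| ≤ (α−ε/2)|C|. Let T be a natural number with T ≤ |C| and T ≥ (32/ε²)·ln(4n). Then there exists a subset S ⊆ C with |S| = T such that {v : |Γ(v) ∩ S| ≥ (α−ε/4)T} = C. -/
/-!
A random-sampling argument, phrased by counting: for each vertex `v`, few `T`-subsets `S ⊆ C`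
misclassify `v` by the threshold `(α - ε/4) T`. The count `|Γ(v) ∩ S|` is hypergeometric with
mean fraction at least `α` if `v ∈ C` and at most `α - ε/2` otherwise, so a Chernoff bound gives
at most a fraction `exp (-ε² T / 8) < 1 / n` of bad subsets per vertex, and a union bound over
the `n` vertices leaves a good `S`. For the Chernoff bound, the moment generating function of the
hypergeometric count is dominated by the binomial one (compare factorial moments), to which
Hoeffding's lemma applies.
-/

open Finset Real MeasureTheory ProbabilityTheory

/-- Hoeffding's lemma for a Bernoulli variable. -/
lemma one_sub_add_mul_exp_le {p : ℝ} (hp0 : 0 ≤ p) (hp1 : p ≤ 1) (l : ℝ) :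
    1 - p + p * exp l ≤ exp (p * l + l ^ 2 / 8) := by
  set μ : Measure ℝ := Ber(1, 0, ⟨p, hp0, hp1⟩)
  have hsupp : ∀ᵐ z ∂μ, z ∈ Set.Icc (0 : ℝ) 1 := by
    rw [ae_iff]
    exact bernoulliMeasure_apply_of_notMem_of_notMem _ measurableSet_Icc.compl (by simp) (by simp)
  have hoeff := (hasSubgaussianMGF_of_mem_Icc aemeasurable_id hsupp).mgf_le l
  norm_num [mgf, μ, integral_bernoulliMeasure] at hoeff
  calc 1 - p + p * exp l
      = (p * exp (l * (1 - p)) + (1 - p) * exp (-(l * p))) * exp (p * l) := by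
        rw [add_mul, mul_assoc, mul_assoc, ← exp_add, ← exp_add,
          show l * (1 - p) + p * l = l by ring, show -(l * p) + p * l = 0 by ring, exp_zero]
        ring
    _ ≤ exp (1 / 4 * l ^ 2 / 2) * exp (p * l) := by gcongr
    _ = exp (p * l + l ^ 2 / 8) := by rw [← exp_add]; ring_nf

lemma Nat.choose_mul_pow_le_choose_mul_pow {a c : ℕ} (h : a ≤ c) (j : ℕ) :
    a.choose j * c ^ j ≤ c.choose j * a ^ j := by
  induction j with
  | zero => simp
  | succ j ih =>
    have hstep : (a - j) * c ≤ (c - j) * a := by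
      rw [Nat.sub_mul, Nat.sub_mul, Nat.mul_comm a c]
      exact Nat.sub_le_sub_left (Nat.mul_le_mul_left j h) (c * a)
    refine Nat.le_of_mul_le_mul_right ?_ j.succ_pos
    calc a.choose (j + 1) * c ^ (j + 1) * (j + 1)
        = a.choose (j + 1) * (j + 1) * c ^ (j + 1) := by ring
      _ = a.choose j * c ^ j * ((a - j) * c) := by rw [Nat.choose_succ_right_eq]; ring
      _ ≤ c.choose j * a ^ j * ((c - j) * a) := Nat.mul_le_mul ih hstep
      _ = c.choose (j + 1) * (j + 1) * a ^ (j + 1) := by rw [Nat.choose_succ_right_eq]; ring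
      _ = c.choose (j + 1) * a ^ (j + 1) * (j + 1) := by ring

lemma Nat.cast_choose_div_cast_choose_le_pow {a c : ℕ} (h : a ≤ c) (j : ℕ) :
    (a.choose j / c.choose j : ℝ) ≤ ((a : ℝ) / c) ^ j := by
  rcases (c.choose j).eq_zero_or_pos with hcj | hcj
  · simp only [hcj, Nat.cast_zero, div_zero]; positivity
  rcases c.eq_zero_or_pos with rfl | hc
  · obtain rfl : j = 0 := by have := Nat.choose_eq_zero_iff.not.1 hcj.ne'; omega
    simp
  rw [div_pow, div_le_div_iff₀ (by exact_mod_cast hcj) (by positivity)]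
  exact_mod_cast (Nat.choose_mul_pow_le_choose_mul_pow h j).trans_eq (mul_comm _ _)

lemma sum_range_choose_mul_pow_le {z : ℝ} (hz : 0 ≤ z) (T m : ℕ) :
    ∑ j ∈ range m, (T.choose j : ℝ) * z ^ j ≤ (1 + z) ^ T := by
  calc ∑ j ∈ range m, (T.choose j : ℝ) * z ^ j
      ≤ ∑ j ∈ range (m + (T + 1)), (T.choose j : ℝ) * z ^ j :=
        sum_le_sum_of_subset_of_nonneg (range_subset_range.2 (by omega))
          fun _ _ _ => by positivity
    _ = ∑ j ∈ range (T + 1), (T.choose j : ℝ) * z ^ j := by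
        refine (sum_subset (range_subset_range.2 (by omega)) fun j _ hj => ?_).symm
        rw [Nat.choose_eq_zero_of_lt (by simpa using hj)]; simp
    _ = (1 + z) ^ T := by
        rw [add_comm 1 z, add_pow]; exact sum_congr rfl fun j _ => by simp [mul_comm]

theorem Finset.card_filter_powersetCard_subset_mul_choose {α : Type*} [DecidableEq α]
    {s t : Finset α} (hst : s ⊆ t) (n : ℕ) :
    #{u ∈ t.powersetCard n | s ⊆ u} * (#t).choose #s = (#t).choose n * n.choose #s := by
  by_cases hsn : #s ≤ n
  · rw [card_filter_powersetCard_subset s t n hst hsn, Nat.choose_mul hsn, mul_comm]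
  · rw [Nat.choose_eq_zero_of_lt (by omega : n < #s), mul_zero, Nat.mul_eq_zero]
    left
    refine card_eq_zero.2 (filter_eq_empty_iff.2 fun u hu hsu => hsn ?_)
    exact (card_le_card hsu).trans (mem_powersetCard.1 hu).2.le

theorem sum_powersetCard_one_add_pow_card_inter_le {α : Type*} [DecidableEq α]
    (N C : Finset α) (T : ℕ) {y : ℝ} (hy : 0 ≤ y) :
    ∑ S ∈ C.powersetCard T, (1 + y) ^ #(N ∩ S) ≤ (#C).choose T * (1 + #(N ∩ C) / #C * y) ^ T := by
  have hexpand (S : Finset α) : (1 + y) ^ #(N ∩ S) = ∑ J ∈ (N ∩ S).powerset, y ^ #J := by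
    rw [add_comm, ← sum_pow_mul_eq_add_pow]; simp
  have hcount : ∀ J ∈ (N ∩ C).powerset, (#{S ∈ C.powersetCard T | J ⊆ S} : ℝ) =
      (#C).choose T * T.choose #J / (#C).choose #J := by
    intro J hJ
    have hJC : J ⊆ C := (mem_powerset.1 hJ).trans inter_subset_right
    rw [eq_div_iff (by exact_mod_cast (Nat.choose_pos (card_le_card hJC)).ne')]
    exact_mod_cast card_filter_powersetCard_subset_mul_choose hJC T
  calc ∑ S ∈ C.powersetCard T, (1 + y) ^ #(N ∩ S)
      = ∑ J ∈ (N ∩ C).powerset, ∑ S ∈ C.powersetCard T with J ⊆ S, y ^ #J := by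
        simp_rw [hexpand]
        refine sum_comm' fun S J => ?_
        simp only [mem_powerset, mem_filter, mem_powersetCard, subset_inter_iff]
        constructor
        · rintro ⟨⟨hSC, hST⟩, hJN, hJS⟩; exact ⟨⟨⟨hSC, hST⟩, hJS⟩, hJN, hJS.trans hSC⟩
        · rintro ⟨⟨⟨hSC, hST⟩, hJS⟩, hJN, -⟩; exact ⟨⟨hSC, hST⟩, hJN, hJS⟩
    _ = ∑ J ∈ (N ∩ C).powerset, (#C).choose T * T.choose #J / (#C).choose #J * y ^ #J :=
        sum_congr rfl fun J hJ => by rw [sum_const, nsmul_eq_mul, hcount J hJ]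
    _ = ∑ j ∈ range (#(N ∩ C) + 1),
          (#(N ∩ C)).choose j • ((#C).choose T * T.choose j / (#C).choose j * y ^ j) :=
        sum_powerset_apply_card (fun j => (#C).choose T * T.choose j / (#C).choose j * y ^ j)
    _ ≤ ∑ j ∈ range (#(N ∩ C) + 1), (#C).choose T * (T.choose j * (#(N ∩ C) / #C * y) ^ j) := by
        gcongr with j
        have hratio := Nat.cast_choose_div_cast_choose_le_pow
          (card_le_card (inter_subset_right : N ∩ C ⊆ C)) j
        calc (#(N ∩ C)).choose j • ((#C).choose T * T.choose j / (#C).choose j * y ^ j)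
            = (#C).choose T * T.choose j * y ^ j *
                ((#(N ∩ C)).choose j / (#C).choose j : ℝ) := by rw [nsmul_eq_mul]; ring
          _ ≤ (#C).choose T * T.choose j * y ^ j * ((#(N ∩ C) : ℝ) / #C) ^ j := by gcongr
          _ = _ := by ring
    _ ≤ (#C).choose T * (1 + #(N ∩ C) / #C * y) ^ T := by
        rw [← mul_sum]; gcongr; exact sum_range_choose_mul_pow_le (by positivity) T _

theorem card_filter_add_mul_le_card_inter_le {α : Type*} [DecidableEq α]
    {N C : Finset α} {T : ℕ} {p t : ℝ} (hN : #(N ∩ C) ≤ p * #C) (hp : 0 ≤ p) (ht : 0 ≤ t) :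
    (#{S ∈ C.powersetCard T | (p + t) * T ≤ #(N ∩ S)} : ℝ) ≤
      (#C).choose T * exp (-(2 * t ^ 2 * T)) := by
  set q : ℝ := #(N ∩ C) / #C
  have hq1 : q ≤ 1 := div_le_one_of_le₀ (by exact_mod_cast card_le_card inter_subset_right)
    (Nat.cast_nonneg _)
  have hqp : q ≤ p := div_le_of_le_mul₀ (Nat.cast_nonneg _) hp hN
  -- Markov's inequality for `exp (λ |N ∩ S|)` with `λ = 4 t`, the minimiser of
  -- `λ p + λ² / 8 - λ (p + t)`.
  have hy : 0 ≤ exp (4 * t) - 1 := sub_nonneg.2 (one_le_exp (by positivity))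
  have hmarkov : (#{S ∈ C.powersetCard T | (p + t) * T ≤ #(N ∩ S)} : ℝ) *
      exp (4 * t * ((p + t) * T)) ≤ ∑ S ∈ C.powersetCard T, (1 + (exp (4 * t) - 1)) ^ #(N ∩ S) := by
    rw [← nsmul_eq_mul]
    refine (card_nsmul_le_sum _ _ _ fun S hS => ?_).trans
      (sum_le_sum_of_subset_of_nonneg (filter_subset _ _) fun _ _ _ => pow_nonneg (by linarith) _)
    rw [add_sub_cancel, ← exp_nat_mul, mul_comm (_ : ℝ) (4 * t)]
    exact exp_le_exp.2 (mul_le_mul_of_nonneg_left (mem_filter.1 hS).2 (by positivity))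
  have hmgf := sum_powersetCard_one_add_pow_card_inter_le N C T hy
  have hbernoulli : 1 + q * (exp (4 * t) - 1) ≤ exp (p * (4 * t) + (4 * t) ^ 2 / 8) :=
    calc 1 + q * (exp (4 * t) - 1) = 1 - q + q * exp (4 * t) := by ring
      _ ≤ exp (q * (4 * t) + (4 * t) ^ 2 / 8) := one_sub_add_mul_exp_le (by positivity) hq1 (4 * t)
      _ ≤ exp (p * (4 * t) + (4 * t) ^ 2 / 8) := by gcongr
  refine le_of_mul_le_mul_right (hmarkov.trans (hmgf.trans ?_)) (exp_pos (4 * t * ((p + t) * T)))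
  calc (#C).choose T * (1 + q * (exp (4 * t) - 1)) ^ T
      ≤ (#C).choose T * exp (p * (4 * t) + (4 * t) ^ 2 / 8) ^ T := by gcongr
    _ = (#C).choose T * exp (-(2 * t ^ 2 * T)) * exp (4 * t * ((p + t) * T)) := by
        rw [← exp_nat_mul, mul_assoc, ← exp_add]; ring_nf

theorem card_filter_card_inter_lt_sub_mul_le {α : Type*} [DecidableEq α]
    {N C : Finset α} {T : ℕ} {q t : ℝ} (hN : q * #C ≤ #(N ∩ C)) (hq : q ≤ 1) (ht : 0 ≤ t) :
    (#{S ∈ C.powersetCard T | #(N ∩ S) < (q - t) * T} : ℝ) ≤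
      (#C).choose T * exp (-(2 * t ^ 2 * T)) := by
  have hsplit (S : Finset α) (hSC : S ⊆ C) : (#((C \ N) ∩ S) : ℝ) + #(N ∩ S) = #S := by
    rw [sdiff_inter_right_comm, inter_eq_right.2 hSC, inter_comm]
    exact_mod_cast card_sdiff_add_card_inter S N
  have hcompl : #((C \ N) ∩ C) ≤ (1 - q) * #C := by
    linarith [hsplit C subset_rfl]
  refine le_trans ?_ (card_filter_add_mul_le_card_inter_le hcompl (by linarith) ht)
  gcongr with S hS
  intro hlow
  have := hsplit S (mem_powersetCard.1 hS).1
  rw [(mem_powersetCard.1 hS).2] at this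
  linarith

theorem Finset.exists_mem_forall_not_of_sum_card_filter_lt {ι β : Type*} {I : Finset ι}
    {s : Finset β} (P : ι → β → Prop) [∀ i, DecidablePred (P i)]
    (h : ∑ i ∈ I, #{x ∈ s | P i x} < #s) : ∃ x ∈ s, ∀ i ∈ I, ¬P i x := by
  classical
  by_contra! hcover
  have hsub : s ⊆ I.biUnion fun i => {x ∈ s | P i x} := fun x hx => by
    obtain ⟨i, hi, hPx⟩ := hcover x hx
    exact mem_biUnion.2 ⟨i, hi, mem_filter.2 ⟨hx, hPx⟩⟩
  exact h.not_ge ((card_le_card hsub).trans card_biUnion_le)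

lemma mul_exp_neg_lt_one {n x : ℝ} (hn : 0 ≤ n) (h : log (4 * n) ≤ x) : n * exp (-x) < 1 := by
  rcases hn.eq_or_lt with rfl | hn
  · simp
  calc n * exp (-x) ≤ n * exp (-log (4 * n)) := by gcongr
    _ = 1 / 4 := by rw [exp_neg, exp_log (by positivity)]; field_simp
    _ < 1 := by norm_num

/-- Identifiability of a dense community with an `ε/2` edge-fraction gap: it is exactly
determined by an edge-count threshold against some witness subset `S ⊆ C` of size `T`,
provided `T ≥ (32/ε²)·ln(4n)`. -/
theorem dense_identified_by_witness {V : Type*} [Fintype V] [DecidableEq V]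
    (G : SimpleGraph V) [DecidableRel G.Adj]
    (α ε : ℝ) (hε0 : 0 < ε) (hεα : ε ≤ α) (hα : α ≤ 1)
    (C : Finset V)
    (hin : ∀ v ∈ C, α * C.card ≤ ((G.neighborFinset v ∩ C).card : ℝ))
    (hout : ∀ v, v ∉ C → ((G.neighborFinset v ∩ C).card : ℝ) ≤ (α - ε / 2) * C.card)
    (T : ℕ) (hT1 : T ≤ C.card)
    (hT2 : (32 / ε ^ 2) * Real.log (4 * Fintype.card V) ≤ (T : ℝ)) :
    ∃ S ⊆ C, S.card = T ∧
      Finset.univ.filter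
        (fun v => (α - ε / 4) * T ≤ ((G.neighborFinset v ∩ S).card : ℝ)) = C := by
  set bound : ℝ := (#C).choose T * exp (-(2 * (ε / 4) ^ 2 * T))
  have hmisclassified (v : V) : (#{S ∈ C.powersetCard T |
      ¬((α - ε / 4) * T ≤ #(G.neighborFinset v ∩ S) ↔ v ∈ C)} : ℝ) ≤ bound := by
    by_cases hv : v ∈ C
    · simpa only [hv, iff_true, not_le] using
        card_filter_card_inter_lt_sub_mul_le (T := T) (hin v hv) hα (t := ε / 4) (by positivity)
    · simpa only [hv, iff_false, not_not, show α - ε / 2 + ε / 4 = α - ε / 4 by ring] using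
        card_filter_add_mul_le_card_inter_le (T := T) (hout v hv) (by linarith) (t := ε / 4)
          (by positivity)
  have hexp : Fintype.card V * exp (-(2 * (ε / 4) ^ 2 * T)) < 1 := by
    refine mul_exp_neg_lt_one (Nat.cast_nonneg _) ?_
    rw [div_mul_eq_mul_div, div_le_iff₀ (by positivity)] at hT2
    nlinarith [show 0 ≤ (T : ℝ) * ε ^ 2 by positivity]
  have hsum : ∑ v, #{S ∈ C.powersetCard T |
      ¬((α - ε / 4) * T ≤ #(G.neighborFinset v ∩ S) ↔ v ∈ C)} < #(C.powersetCard T) := by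
    have hK : (0 : ℝ) < (#C).choose T := by exact_mod_cast Nat.choose_pos hT1
    rw [← Nat.cast_lt (α := ℝ), card_powersetCard]
    push_cast
    calc _ ≤ ∑ _v : V, bound := sum_le_sum fun v _ => hmisclassified v
      _ = (#C).choose T * (Fintype.card V * exp (-(2 * (ε / 4) ^ 2 * T))) := by
        rw [sum_const, card_univ, nsmul_eq_mul]; ring
      _ < (#C).choose T := by nlinarith
  obtain ⟨S, hS, hgood⟩ := exists_mem_forall_not_of_sum_card_filter_lt _ hsum
  refine ⟨S, (mem_powersetCard.1 hS).1, (mem_powersetCard.1 hS).2, ?_⟩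
  ext v
  simpa using hgood v (mem_univ v)
end

section
/- Let G be a simple graph on a finite vertex set, β ∈ [0,1], and let C and D be finite sets of vertices with D nonempty, such that every u ∈ C satisfies |Γ(u) ∩ D| ≥ β|D|. Let T be a natural number with T ≤ |D|. Then there exists a subset S ⊆ D with |S| = T such that the number of u ∈ C adjacent to at least one element of S is at least (1 − (1−β)^T)·|C|. -/
open Finset

private lemma double_count {V : Type*} [Fintype V] [DecidableEq V]
    (G : SimpleGraph V) [DecidableRel G.Adj] (A B : Finset V) :
    ∑ v ∈ A, (G.neighborFinset v ∩ B).card = ∑ u ∈ B, (G.neighborFinset u ∩ A).card := by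
  have h : ∀ (X Y : Finset V), ∑ v ∈ X, (G.neighborFinset v ∩ Y).card
      = ∑ v ∈ X, ∑ u ∈ Y, (if G.Adj v u then 1 else 0) := by
    intro X Y
    refine Finset.sum_congr rfl fun v _ => ?_
    rw [inter_comm, ← Finset.filter_mem_eq_inter, Finset.card_filter]
    simp [SimpleGraph.mem_neighborFinset]
  rw [h, h, Finset.sum_comm]
  refine Finset.sum_congr rfl fun u _ => Finset.sum_congr rfl fun v _ => ?_
  simp [G.adj_comm]

/-- Covering step: if every `u ∈ C` has at least a `β` fraction of edges into `D`, then some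
size-`T` subset `S ⊆ D` has at least a `1 - (1-β)^T` fraction of `C` in its neighborhood. -/
theorem exists_witness_covering {V : Type*} [Fintype V] [DecidableEq V]
    (G : SimpleGraph V) [DecidableRel G.Adj]
    (β : ℝ) (hβ0 : 0 ≤ β) (hβ1 : β ≤ 1)
    (C D : Finset V) (hDne : D.Nonempty)
    (hdeg : ∀ u ∈ C, β * D.card ≤ ((G.neighborFinset u ∩ D).card : ℝ))
    (T : ℕ) (hT : T ≤ D.card) :
    ∃ S ⊆ D, S.card = T ∧
      (1 - (1 - β) ^ T) * C.card ≤ ((C.filter (fun u => ∃ s ∈ S, G.Adj u s)).card : ℝ) := by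
  have h1β : (0:ℝ) ≤ 1 - β := by linarith
  -- Main greedy induction: bound the *uncovered* part.
  have main : ∀ t : ℕ, t ≤ D.card → ∃ S ⊆ D, S.card = t ∧
      ((C.filter (fun u => ¬ ∃ s ∈ S, G.Adj u s)).card : ℝ) ≤ (1 - β) ^ t * C.card := by
    intro t
    induction t with
    | zero =>
      intro _
      refine ⟨∅, empty_subset _, card_empty, ?_⟩
      simp
    | succ t ih =>
      intro ht1
      obtain ⟨S, hSD, hScard, hSbound⟩ := ih (Nat.le_of_succ_le ht1)
      set U := C.filter (fun u => ¬ ∃ s ∈ S, G.Adj u s) with hU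
      -- D \ S is nonempty
      have hDS : (D \ S).card = D.card - t := by
        rw [card_sdiff_of_subset hSD, hScard]
      have hDSne : (D \ S).Nonempty := by
        rw [← card_pos, hDS]
        omega
      -- each uncovered u has all its D-neighbors in D \ S
      have hkey : ∀ u ∈ U, G.neighborFinset u ∩ (D \ S) = G.neighborFinset u ∩ D := by
        intro u hu
        rw [hU, mem_filter] at hu
        apply Finset.Subset.antisymm
        · exact inter_subset_inter (Finset.Subset.refl _) sdiff_subset
        · intro w hw
          rw [mem_inter] at hw ⊢
          refine ⟨hw.1, mem_sdiff.2 ⟨hw.2, fun hwS => ?_⟩⟩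
          exact hu.2 ⟨w, hwS, (SimpleGraph.mem_neighborFinset _ _ _).1 hw.1⟩
      -- sum lower bound
      have hsum : ((D \ S).card : ℝ) * (β * U.card)
          ≤ ∑ v ∈ D \ S, ((G.neighborFinset v ∩ U).card : ℝ) := by
        have := double_count G (D \ S) U
        have hcast : ∑ v ∈ D \ S, ((G.neighborFinset v ∩ U).card : ℝ)
            = ∑ u ∈ U, ((G.neighborFinset u ∩ (D \ S)).card : ℝ) := by
          exact_mod_cast congrArg (Nat.cast : ℕ → ℝ) this
        rw [hcast]
        have hbd : ∀ u ∈ U, β * D.card ≤ ((G.neighborFinset u ∩ (D \ S)).card : ℝ) := by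
          intro u hu
          rw [hkey u hu]
          exact hdeg u (mem_of_mem_filter u hu)
        calc ((D \ S).card : ℝ) * (β * U.card) ≤ (U.card : ℝ) * (β * D.card) := by
              have h1 : ((D \ S).card : ℝ) ≤ (D.card : ℝ) := by
                exact_mod_cast card_le_card (sdiff_subset)
              have h2 := mul_le_mul_of_nonneg_left h1
                (mul_nonneg hβ0 (Nat.cast_nonneg U.card))
              nlinarith [h2]
          _ = ∑ _u ∈ U, β * (D.card : ℝ) := by rw [Finset.sum_const, nsmul_eq_mul]
          _ ≤ _ := Finset.sum_le_sum hbd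
      -- choose a good vertex v
      have hex : ∃ v ∈ D \ S, β * (U.card : ℝ) ≤ ((G.neighborFinset v ∩ U).card : ℝ) := by
        by_contra hcon
        push_neg at hcon
        have : ∑ v ∈ D \ S, ((G.neighborFinset v ∩ U).card : ℝ)
            < ∑ _v ∈ D \ S, β * (U.card : ℝ) :=
          Finset.sum_lt_sum_of_nonempty hDSne hcon
        rw [Finset.sum_const, nsmul_eq_mul] at this
        nlinarith
      obtain ⟨v, hvDS, hv⟩ := hex
      rw [mem_sdiff] at hvDS
      refine ⟨insert v S, insert_subset hvDS.1 hSD, ?_, ?_⟩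
      · rw [card_insert_of_notMem hvDS.2, hScard]
      · -- new uncovered set
        have hfilter : C.filter (fun u => ¬ ∃ s ∈ insert v S, G.Adj u s)
            = U.filter (fun u => ¬ G.Adj u v) := by
          rw [hU, Finset.filter_filter]
          apply Finset.filter_congr
          intro u _
          simp only [mem_insert]
          constructor
          · intro h
            exact ⟨fun ⟨s, hs, hadj⟩ => h ⟨s, Or.inr hs, hadj⟩, fun hadj => h ⟨v, Or.inl rfl, hadj⟩⟩
          · rintro ⟨h1, h2⟩ ⟨s, hs | hs, hadj⟩
            · exact h2 (hs ▸ hadj)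
            · exact h1 ⟨s, hs, hadj⟩
        have hcardsplit : (U.filter (fun u => ¬ G.Adj u v)).card
            = U.card - (U.filter (fun u => G.Adj u v)).card := by
          have := Finset.card_filter_add_card_filter_not
            (s := U) (p := fun u => G.Adj u v)
          omega
        have hnf : (U.filter (fun u => G.Adj u v)).card = (G.neighborFinset v ∩ U).card := by
          congr 1
          rw [inter_comm, ← Finset.filter_mem_eq_inter]
          apply Finset.filter_congr
          intro u _
          simp [SimpleGraph.mem_neighborFinset, G.adj_comm]
        rw [hfilter]
        have hle : (U.filter (fun u => G.Adj u v)).card ≤ U.card :=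
          card_le_card (filter_subset _ _)
        have : ((U.filter (fun u => ¬ G.Adj u v)).card : ℝ)
            = (U.card : ℝ) - ((U.filter (fun u => G.Adj u v)).card : ℝ) := by
          rw [hcardsplit]
          push_cast [Nat.cast_sub hle]
          ring
        rw [this, hnf]
        have hCcard : (0:ℝ) ≤ C.card := Nat.cast_nonneg _
        calc (U.card : ℝ) - ((G.neighborFinset v ∩ U).card : ℝ)
            ≤ (U.card : ℝ) - β * U.card := by linarith
          _ = (1 - β) * U.card := by ring
          _ ≤ (1 - β) * ((1 - β) ^ t * C.card) := by
              exact mul_le_mul_of_nonneg_left hSbound h1β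
          _ = (1 - β) ^ (t + 1) * C.card := by ring
  obtain ⟨S, hSD, hScard, hSbound⟩ := main T hT
  refine ⟨S, hSD, hScard, ?_⟩
  have hsplit : (C.filter (fun u => ∃ s ∈ S, G.Adj u s)).card
      + (C.filter (fun u => ¬ ∃ s ∈ S, G.Adj u s)).card = C.card :=
    Finset.card_filter_add_card_filter_not (s := C) (p := fun u => ∃ s ∈ S, G.Adj u s)
  have : ((C.filter (fun u => ∃ s ∈ S, G.Adj u s)).card : ℝ)
      = (C.card : ℝ) - ((C.filter (fun u => ¬ ∃ s ∈ S, G.Adj u s)).card : ℝ) := by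
    have := congrArg (Nat.cast : ℕ → ℝ) hsplit
    push_cast at this
    linarith
  rw [this]
  nlinarith [hSbound]
end

section
/- Let G be a simple graph on a finite vertex set, and let α, ε be reals with 0 < ε ≤ α ≤ 1. Let C be a set of vertices and D a nonempty finite set of vertices such that every u ∈ C satisfies |Γ(u) ∩ D| ≥ (α−ε/4)|D| and every u ∉ C satisfies |Γ(u) ∩ D| ≤ (α−7ε/8)|D|. Let V′ be a finite set of vertices whose symmetric difference with D has size at most (ε/20)|D|. Then {u ∈ V′ : |Γ(u) ∩ V′| ≥ (α−ε/2)|V′|} = V′ ∩ C. -/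
/-!
Passing from `D` to `V′` moves every degree `|Γ(u) ∩ ·|` and the set size by at most
`S = |V′ ∆ D| ≤ (ε/20)|D|`, and since the threshold factor `α - ε/2` lies in `[0, 1]`, the
threshold `(α - ε/2)|·|` also moves by at most `S`. The margins `ε/4` (above the threshold, for
`u ∈ C`) and `3ε/8` (below it, for `u ∉ C`) both exceed the total error `2S ≤ (ε/10)|D|`.
-/

open Finset
open scoped symmDiff

namespace Finset

variable {α : Type*} [DecidableEq α]

theorem card_inter_le_card_inter_add_card_symmDiff (A s t : Finset α) :
    #(A ∩ s) ≤ #(A ∩ t) + #(s ∆ t) := by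
  have hsub : A ∩ s ⊆ A ∩ t ∪ s ∆ t := by
    intro x hx
    rw [mem_inter] at hx
    by_cases hxt : x ∈ t
    · exact mem_union_left _ (mem_inter.2 ⟨hx.1, hxt⟩)
    · exact mem_union_right _ (mem_symmDiff.2 (Or.inl ⟨hx.2, hxt⟩))
  exact (card_le_card hsub).trans (card_union_le _ _)

theorem abs_card_inter_sub_card_inter_le_card_symmDiff (A s t : Finset α) :
    |(#(A ∩ s) : ℝ) - #(A ∩ t)| ≤ #(s ∆ t) := by
  have hst : (#(A ∩ s) : ℝ) ≤ #(A ∩ t) + #(s ∆ t) := by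
    exact_mod_cast card_inter_le_card_inter_add_card_symmDiff A s t
  have hts : (#(A ∩ t) : ℝ) ≤ #(A ∩ s) + #(s ∆ t) := by
    exact_mod_cast symmDiff_comm s t ▸ card_inter_le_card_inter_add_card_symmDiff A t s
  exact abs_sub_le_iff.2 ⟨by linarith, by linarith⟩

theorem abs_card_sub_card_le_card_symmDiff (s t : Finset α) :
    |(#s : ℝ) - #t| ≤ #(s ∆ t) := by
  simpa using abs_card_inter_sub_card_inter_le_card_symmDiff (s ∪ t) s t

end Finset

theorem mul_le_mul_add_of_abs_sub_le {β x y S : ℝ} (hβ0 : 0 ≤ β) (hβ1 : β ≤ 1)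
    (h : |x - y| ≤ S) : β * x ≤ β * y + S := by
  have : β * (x - y) ≤ |x - y| :=
    (mul_le_mul_of_nonneg_left (le_abs_self _) hβ0).trans
      (mul_le_of_le_one_left (abs_nonneg _) hβ1)
  linarith

/-- Deterministic degree-filter step: if `V′` nearly equals a reference set `D` that
separates `C` from its complement by an edge-fraction gap, then thresholding degrees inside
`V′` at `α - ε/2` extracts exactly the community part of `V′`. -/
theorem degree_filter_extracts_community {V : Type*} [Fintype V] [DecidableEq V]
    (G : SimpleGraph V) [DecidableRel G.Adj]
    (α ε : ℝ) (hε0 : 0 < ε) (hεα : ε ≤ α) (hα : α ≤ 1)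
    (C : Finset V) (D : Finset V) (hDne : D.Nonempty)
    (hin : ∀ u ∈ C, (α - ε / 4) * D.card ≤ ((G.neighborFinset u ∩ D).card : ℝ))
    (hout : ∀ u, u ∉ C → ((G.neighborFinset u ∩ D).card : ℝ) ≤ (α - 7 * ε / 8) * D.card)
    (V' : Finset V)
    (hsym : ((((V' \ D) ∪ (D \ V')).card : ℝ)) ≤ (ε / 20) * D.card) :
    V'.filter (fun u => (α - ε / 2) * V'.card ≤ ((G.neighborFinset u ∩ V').card : ℝ))
      = V' ∩ C := by
  rw [← Finset.symmDiff_def] at hsym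
  have hεD : 0 < ε * #D := mul_pos hε0 (by exact_mod_cast hDne.card_pos)
  have hβ0 : 0 ≤ α - ε / 2 := by linarith
  have hβ1 : α - ε / 2 ≤ 1 := by linarith
  have hsize := abs_card_sub_card_le_card_symmDiff V' D
  have hdeg u := abs_card_inter_sub_card_inter_le_card_symmDiff (G.neighborFinset u) V' D
  ext u
  simp only [mem_filter, mem_inter, and_congr_right_iff]
  intro _
  constructor
  · intro hhigh
    by_contra huC
    have hthreshold := mul_le_mul_add_of_abs_sub_le hβ0 hβ1 (abs_sub_comm (#V' : ℝ) #D ▸ hsize)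
    linarith [hout u huC, (abs_sub_le_iff.1 (hdeg u)).1]
  · intro huC
    have hthreshold := mul_le_mul_add_of_abs_sub_le hβ0 hβ1 hsize
    linarith [hin u huC, (abs_sub_le_iff.1 (hdeg u)).2]
end

section
/- Let G be a simple graph on a finite vertex set, and let α, ε be reals with 0 < ε ≤ α ≤ 1. Let C be a nonempty finite set of vertices such that every u ∈ C satisfies |Γ(u) ∩ C| ≥ (α−ε/8)|C| and every u ∉ C satisfies |Γ(u) ∩ C| ≤ (α−7ε/8)|C|. Let U′ ⊆ C with |U′| ≥ (1−ε/10)|C|. Then {u : |Γ(u) ∩ U′| ≥ (α−ε/2)|U′|} = C. -/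
open Finset

/-- Final extension step: once a subset `U′` covering at least a `1 - ε/10` fraction of the
community `C` is found, thresholding each vertex's edge-fraction into `U′` at `α - ε/2`
recovers `C` exactly. -/
theorem extension_recovers_community {V : Type*} [Fintype V] [DecidableEq V]
    (G : SimpleGraph V) [DecidableRel G.Adj]
    (α ε : ℝ) (hε0 : 0 < ε) (hεα : ε ≤ α) (hα : α ≤ 1)
    (C : Finset V) (hCne : C.Nonempty)
    (hin : ∀ u ∈ C, (α - ε / 8) * C.card ≤ ((G.neighborFinset u ∩ C).card : ℝ))
    (hout : ∀ u, u ∉ C → ((G.neighborFinset u ∩ C).card : ℝ) ≤ (α - 7 * ε / 8) * C.card)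
    (U' : Finset V) (hU'C : U' ⊆ C)
    (hU'size : (1 - ε / 10) * C.card ≤ (U'.card : ℝ)) :
    Finset.univ.filter
        (fun u => (α - ε / 2) * U'.card ≤ ((G.neighborFinset u ∩ U').card : ℝ)) = C := by
  have hn : (0:ℝ) < C.card := Nat.cast_pos.mpr hCne.card_pos
  have hmn : (U'.card : ℝ) ≤ C.card := Nat.cast_le.mpr (card_le_card hU'C)
  ext u
  simp only [mem_filter, mem_univ, true_and]
  constructor
  · intro h
    by_contra hu
    have h2 := hout u hu
    have h3 : ((G.neighborFinset u ∩ U').card : ℝ) ≤ ((G.neighborFinset u ∩ C).card : ℝ) :=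
      Nat.cast_le.mpr (card_le_card (inter_subset_inter le_rfl hU'C))
    nlinarith [mul_nonneg (by linarith : (0:ℝ) ≤ α - ε/2)
        (by linarith : (0:ℝ) ≤ (U'.card:ℝ) - (1 - ε/10) * C.card),
      mul_pos (mul_pos hε0 hn) (show (0:ℝ) < 3/8 - α/10 + ε/20 by linarith)]
  · intro hu
    have h1 := hin u hu
    have hsub : G.neighborFinset u ∩ C ⊆ (G.neighborFinset u ∩ U') ∪ (C \ U') := by
      intro v hv
      simp only [mem_inter, mem_union, mem_sdiff] at hv ⊢
      by_cases hvU : v ∈ U'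
      · exact Or.inl ⟨hv.1, hvU⟩
      · exact Or.inr ⟨hv.2, hvU⟩
    have h2 : ((G.neighborFinset u ∩ C).card : ℝ) ≤
        ((G.neighborFinset u ∩ U').card : ℝ) + ((C.card : ℝ) - U'.card) := by
      have := (card_le_card hsub).trans (card_union_le _ _)
      have hsd : (C \ U').card = C.card - U'.card := card_sdiff_of_subset hU'C
      have hle := card_le_card hU'C
      rw [hsd] at this
      have h4 : ((#(G.neighborFinset u ∩ C)) : ℝ) ≤
          (#(G.neighborFinset u ∩ U') : ℝ) + ((#C - #U' : ℕ) : ℝ) := by exact_mod_cast this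
      rwa [Nat.cast_sub hle] at h4
    nlinarith [mul_nonneg (by linarith : (0:ℝ) ≤ 1 - α + ε/2)
        (by linarith : (0:ℝ) ≤ (U'.card:ℝ) - (1 - ε/10) * C.card),
      mul_nonneg (mul_nonneg hε0.le hn.le) (show (0:ℝ) ≤ 11/40 + α/10 - ε/20 by linarith)]
end

section
/- Let G be a simple graph on a finite vertex set, C a clique, and ε, ε′ > 0. Let R ⊆ C with |R| ≥ |C|/2, let H be a finite set of vertices disjoint from C such that every h ∈ H satisfies |Γ(h) ∩ C| ≥ (1−ε′)|C|, and set V = R ∪ H. If |V| ≥ 1/ε′, then the number of v ∈ R with |Γ(v) ∩ V| < (1−ε/2)|V| is at most (6ε′/ε)·|R|. -/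
open Finset

/-- Claim (i) of the relaxed-gap theorem: in a round of the density-removal process, only a
small fraction of the clique vertices have low density. -/
theorem few_clique_vertices_low_density {V : Type*} [Fintype V] [DecidableEq V]
    (G : SimpleGraph V) [DecidableRel G.Adj]
    (C : Finset V) (hclique : ∀ x ∈ C, ∀ y ∈ C, x ≠ y → G.Adj x y)
    (ε ε' : ℝ) (hε : 0 < ε) (hε' : 0 < ε')
    (R : Finset V) (hRC : R ⊆ C) (hR : (C.card : ℝ) / 2 ≤ (R.card : ℝ))
    (H : Finset V) (hHC : Disjoint H C)
    (hH : ∀ h ∈ H, (1 - ε') * C.card ≤ ((G.neighborFinset h ∩ C).card : ℝ))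
    (hV : 1 / ε' ≤ (((R ∪ H).card : ℝ))) :
    ((R.filter (fun v =>
        ((G.neighborFinset v ∩ (R ∪ H)).card : ℝ) < (1 - ε / 2) * (R ∪ H).card)).card : ℝ)
      ≤ (6 * ε' / ε) * R.card := by
  classical
  set B := R.filter (fun v =>
      ((G.neighborFinset v ∩ (R ∪ H)).card : ℝ) < (1 - ε / 2) * (R ∪ H).card) with hBdef
  have hRH : Disjoint R H := (hHC.mono_right hRC).symm
  have hcardW : (R ∪ H).card = R.card + H.card := card_union_of_disjoint hRH
  set n : ℝ := ((R ∪ H).card : ℝ) with hndef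
  have hnpos : 0 < n := lt_of_lt_of_le (by positivity) hV
  have hn : (1:ℝ) ≤ ε' * n := by
    rw [div_le_iff₀ hε'] at hV; nlinarith
  -- Step A: each bad vertex has many non-neighbours in H
  have stepA : ∀ v ∈ B, ε / 2 * n - 1 ≤ ((H \ G.neighborFinset v).card : ℝ) := by
    intro v hv
    rw [hBdef, mem_filter] at hv
    obtain ⟨hvR, hvbad⟩ := hv
    have hdisj : Disjoint (G.neighborFinset v ∩ R) (G.neighborFinset v ∩ H) :=
      hRH.mono inter_subset_right inter_subset_right
    have h1 : (G.neighborFinset v ∩ (R ∪ H)).card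
        = (G.neighborFinset v ∩ R).card + (G.neighborFinset v ∩ H).card := by
      rw [inter_union_distrib_left, card_union_of_disjoint hdisj]
    have h2 : R.card ≤ (G.neighborFinset v ∩ R).card + 1 := by
      have hsub : R \ {v} ⊆ G.neighborFinset v ∩ R := by
        intro x hx
        rw [mem_sdiff, mem_singleton] at hx
        refine mem_inter.2 ⟨?_, hx.1⟩
        rw [SimpleGraph.mem_neighborFinset]
        exact hclique v (hRC hvR) x (hRC hx.1) (fun h => hx.2 h.symm)
      have := card_le_card hsub
      have h' : R.card ≤ (R \ {v}).card + 1 := by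
        have := card_sdiff_add_card_eq_card (singleton_subset_iff.2 hvR)
        simp at this; omega
      omega
    have h3 : (H \ G.neighborFinset v).card + (H ∩ G.neighborFinset v).card = H.card :=
      card_sdiff_add_card_inter H (G.neighborFinset v)
    have h4 : (H ∩ G.neighborFinset v) = (G.neighborFinset v ∩ H) := inter_comm _ _
    rw [h4] at h3
    have h1' : ((G.neighborFinset v ∩ (R ∪ H)).card : ℝ)
        = ((G.neighborFinset v ∩ R).card : ℝ) + ((G.neighborFinset v ∩ H).card : ℝ) := by
      exact_mod_cast congrArg (Nat.cast : ℕ → ℝ) h1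
    have h2' : (R.card : ℝ) ≤ ((G.neighborFinset v ∩ R).card : ℝ) + 1 := by exact_mod_cast h2
    have h3' : ((H \ G.neighborFinset v).card : ℝ) + ((G.neighborFinset v ∩ H).card : ℝ)
        = (H.card : ℝ) := by exact_mod_cast h3
    have h4' : n = (R.card : ℝ) + (H.card : ℝ) := by
      rw [hndef]; exact_mod_cast hcardW
    linarith
  -- Step B: each h in H has few non-neighbours in C
  have stepB : ∀ h ∈ H, ((C \ G.neighborFinset h).card : ℝ) ≤ ε' * C.card := by
    intro h hh
    have h3 : (C \ G.neighborFinset h).card + (C ∩ G.neighborFinset h).card = C.card :=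
      card_sdiff_add_card_inter C (G.neighborFinset h)
    have h4 : (C ∩ G.neighborFinset h) = (G.neighborFinset h ∩ C) := inter_comm _ _
    rw [h4] at h3
    have h3' : ((C \ G.neighborFinset h).card : ℝ) + ((G.neighborFinset h ∩ C).card : ℝ)
        = (C.card : ℝ) := by exact_mod_cast h3
    have := hH h hh
    linarith
  -- Double counting
  have hcardite : ∀ (s : Finset V) (x : V),
      (s \ G.neighborFinset x).card = ∑ y ∈ s, if G.Adj x y then 0 else 1 := by
    intro s x
    rw [sdiff_eq_filter, card_filter]
    refine sum_congr rfl fun y _ => ?_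
    by_cases hxy : G.Adj x y <;> simp [SimpleGraph.mem_neighborFinset, hxy]
  have dc : ∑ v ∈ B, (H \ G.neighborFinset v).card
      = ∑ h ∈ H, (B \ G.neighborFinset h).card := by
    calc ∑ v ∈ B, (H \ G.neighborFinset v).card
        = ∑ v ∈ B, ∑ h ∈ H, (if G.Adj v h then 0 else 1) := by
          exact sum_congr rfl fun v _ => hcardite H v
      _ = ∑ h ∈ H, ∑ v ∈ B, (if G.Adj v h then 0 else 1) := sum_comm
      _ = ∑ h ∈ H, (B \ G.neighborFinset h).card := by
          refine sum_congr rfl fun h _ => ?_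
          rw [sdiff_eq_filter, card_filter]
          refine sum_congr rfl fun v _ => ?_
          have hm : v ∈ G.neighborFinset h ↔ G.Adj v h := by
            rw [SimpleGraph.mem_neighborFinset]; exact G.adj_comm h v
          by_cases hvh : G.Adj v h
          · rw [if_pos hvh, if_neg (by simpa [hm] using hvh)]
          · rw [if_neg hvh, if_pos (by simpa [hm] using hvh)]
  have hBC : B ⊆ C := (filter_subset _ _).trans hRC
  have hmono : ∀ h ∈ H, (B \ G.neighborFinset h).card ≤ (C \ G.neighborFinset h).card :=
    fun h _ => card_le_card (sdiff_subset_sdiff hBC le_rfl)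
  -- Combine
  have key : (B.card : ℝ) * (ε / 2 * n - 1) ≤ ε' * C.card * H.card := by
    have l1 : (B.card : ℝ) * (ε / 2 * n - 1) ≤ ∑ v ∈ B, ((H \ G.neighborFinset v).card : ℝ) := by
      have := Finset.card_nsmul_le_sum B
        (fun v => ((H \ G.neighborFinset v).card : ℝ)) (ε / 2 * n - 1) stepA
      simpa [nsmul_eq_mul] using this
    have l2 : ∑ v ∈ B, ((H \ G.neighborFinset v).card : ℝ)
        = ∑ h ∈ H, ((B \ G.neighborFinset h).card : ℝ) := by exact_mod_cast dc
    have l3 : ∑ h ∈ H, ((B \ G.neighborFinset h).card : ℝ)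
        ≤ ∑ h ∈ H, ((C \ G.neighborFinset h).card : ℝ) := by
      refine sum_le_sum fun h hh => ?_
      exact_mod_cast hmono h hh
    have l4 : ∑ h ∈ H, ((C \ G.neighborFinset h).card : ℝ) ≤ ∑ h ∈ H, ε' * C.card :=
      sum_le_sum stepB
    have l5 : ∑ h ∈ H, ε' * (C.card : ℝ) = ε' * C.card * H.card := by
      rw [sum_const, nsmul_eq_mul]; ring
    linarith
  have hbr : (B.card : ℝ) ≤ (R.card : ℝ) := by
    exact_mod_cast card_le_card (filter_subset _ _)
  have hHn : ((H.card : ℝ)) ≤ n := by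
    rw [hndef]; exact_mod_cast card_le_card subset_union_right
  have hC2r : (C.card : ℝ) ≤ 2 * R.card := by linarith
  have hbnn : (0:ℝ) ≤ (B.card : ℝ) := Nat.cast_nonneg _
  have hHnn : (0:ℝ) ≤ (H.card : ℝ) := Nat.cast_nonneg _
  have hCnn : (0:ℝ) ≤ (C.card : ℝ) := Nat.cast_nonneg _
  have hrnn : (0:ℝ) ≤ (R.card : ℝ) := Nat.cast_nonneg _
  have key2 : (B.card : ℝ) * (ε / 2 * n - 1) ≤ 2 * ε' * R.card * n := by
    have t1 : ε' * (C.card : ℝ) * H.card ≤ ε' * (2 * (R.card:ℝ)) * H.card :=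
      mul_le_mul_of_nonneg_right (mul_le_mul_of_nonneg_left hC2r hε'.le) hHnn
    have t2 : ε' * (2 * (R.card:ℝ)) * (H.card:ℝ) ≤ ε' * (2 * (R.card:ℝ)) * n :=
      mul_le_mul_of_nonneg_left hHn (by positivity)
    have heq : ε' * (2 * (R.card:ℝ)) * n = 2 * ε' * R.card * n := by ring
    linarith
  rw [div_mul_eq_mul_div, le_div_iff₀ hε]
  rcases le_or_gt 6 (ε * n) with hcase | hcase
  · have h13 : ε * n / 3 ≤ ε / 2 * n - 1 := by linarith
    have h14 : (B.card : ℝ) * (ε * n / 3) ≤ 2 * ε' * R.card * n := by nlinarith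
    nlinarith
  · have hε6 : ε ≤ 6 * ε' := by nlinarith
    nlinarith
end

section
/- Let G be a simple graph on a finite vertex set, ε ∈ (0, 1/2], and C a nonempty clique. Let V₀ be a finite set of vertices with C ⊆ V₀, set ε′ = ε²/(12·(1 + log₂ |V₀|)), and assume |C| ≥ 2/ε′ and that the set W = {u ∈ V₀ \ C : |Γ(u) ∩ C| < (1−ε′)|C|} has size at most ε′|C|. Define a sequence of vertex sets by V_{t+1} = {v ∈ V_t : |Γ(v) ∩ V_t| ≥ (1−ε/2)|V_t|} if some vertex v ∈ V_t has |Γ(v) ∩ V_t| < (1−ε)|V_t|, and V_{t+1} = V_t otherwise. Then the sequence (V_t) is eventually constant, and its limiting set F satisfies |F ∩ C| ≥ (1−ε)|C| and every v ∈ F has |Γ(v) ∩ F| ≥ (1−ε)|F|. -/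
open Finset
open scoped Classical

/-!
The process only shrinks the vertex set, so it stabilises, and at a fixed point no vertex has
density below `1 - ε`. For the clique one shows by induction on `t` that at most `ε|C|` of its
vertices have left `V_t`. A clique vertex removed at time `s` has at least `(ε/2)|V_s| - 1`
non-neighbours in `V_s`, all outside `C`. Group the removed clique vertices by the dyadic scale
`j = ⌊log₂ |V_s|⌋` of their removal time: within one scale all these non-neighbours lie in the set
`S = V_s` of the earliest such removal, with `|S| < 2^(j+1)`, and `|C| ≤ 4·2^j` because most of `C`
is still in `S`. Double counting non-adjacent pairs against `S \ C` (a vertex outside `W` misses at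
most `ε'|C|` clique vertices, and `|W| ≤ ε'|C|`) bounds each scale by `8ε'|C|/ε`, and with at most
`1 + log₂ |V₀|` scales the total loss is at most `(2/3)ε|C|`.
-/

theorem Nat.exists_le_and_not_succ {p : ℕ → Prop} (h0 : p 0) {t : ℕ} (ht : ¬ p (t + 1)) :
    ∃ s ≤ t, p s ∧ ¬ p (s + 1) := by
  induction t with
  | zero => exact ⟨0, le_rfl, h0, ht⟩
  | succ t ih =>
    by_cases hp : p (t + 1)
    · exact ⟨t + 1, le_rfl, hp, ht⟩
    · obtain ⟨s, hs, h⟩ := ih hp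
      exact ⟨s, hs.trans t.le_succ, h⟩

namespace RelaxedGap

variable {V : Type*} [Fintype V] [DecidableEq V] (G : SimpleGraph V) [DecidableRel G.Adj]

noncomputable def removalStep (ε : ℝ) (A : Finset V) : Finset V :=
  if ∃ v ∈ A, ((G.neighborFinset v ∩ A).card : ℝ) < (1 - ε) * A.card
  then A.filter (fun v => (1 - ε / 2) * A.card ≤ ((G.neighborFinset v ∩ A).card : ℝ))
  else A

variable {G} {ε ε' X : ℝ} {A C D S W : Finset V} {u v : V}

lemma removalStep_subset : removalStep G ε A ⊆ A := by
  unfold removalStep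
  split_ifs
  · exact filter_subset _ _
  · exact subset_rfl

lemma card_neighborFinset_inter_lt_of_notMem_removalStep (hv : v ∈ A)
    (hv' : v ∉ removalStep G ε A) :
    ((G.neighborFinset v ∩ A).card : ℝ) < (1 - ε / 2) * A.card := by
  unfold removalStep at hv'
  split_ifs at hv'
  · simpa [hv] using hv'
  · exact absurd hv hv'

lemma le_card_neighborFinset_inter_of_removalStep_eq_self (hε : 0 ≤ ε)
    (hA : removalStep G ε A = A) (hv : v ∈ A) :
    (1 - ε) * A.card ≤ ((G.neighborFinset v ∩ A).card : ℝ) := by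
  by_contra! hlow
  have hv' : v ∈ removalStep G ε A := by rwa [hA]
  rw [removalStep, if_pos ⟨v, hv, hlow⟩, mem_filter] at hv'
  linarith [hv'.2, mul_nonneg hε A.card.cast_nonneg]

lemma card_le_card_neighborFinset_inter_add (hC : G.IsClique (C : Set V)) (hv : v ∈ C) :
    A.card ≤
      (G.neighborFinset v ∩ A).card + ((A \ C).filter (fun u => ¬ G.Adj v u)).card + 1 := by
  have hcover :
      A ⊆ (G.neighborFinset v ∩ A) ∪ insert v ((A \ C).filter (fun u => ¬ G.Adj v u)) := by
    intro u hu
    by_cases hadj : G.Adj v u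
    · simp [hadj, hu]
    by_cases huC : u ∈ C
    · have : u = v := by_contra fun hne => hadj (hC hv huC (Ne.symm hne))
      simp [this]
    · simp [hu, huC, hadj]
  calc A.card ≤ _ := card_le_card hcover
    _ ≤ _ := (card_union_le _ _).trans (Nat.add_le_add_left (card_insert_le _ _) _)

lemma le_card_nonadj_of_notMem_removalStep (hC : G.IsClique (C : Set V)) (hvC : v ∈ C)
    (hv : v ∈ A) (hv' : v ∉ removalStep G ε A) :
    ε / 2 * A.card - 1 ≤ (((A \ C).filter (fun u => ¬ G.Adj v u)).card : ℝ) := by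
  have hcover : (A.card : ℝ) ≤ (G.neighborFinset v ∩ A).card
      + ((A \ C).filter (fun u => ¬ G.Adj v u)).card + 1 := by
    exact_mod_cast card_le_card_neighborFinset_inter_add hC hvC
  linarith [card_neighborFinset_inter_lt_of_notMem_removalStep hv hv']

lemma card_filter_nonadj_le (hD : D ⊆ C)
    (hu : (1 - ε') * C.card ≤ ((G.neighborFinset u ∩ C).card : ℝ)) :
    ((D.filter (fun c => ¬ G.Adj c u)).card : ℝ) ≤ ε' * C.card := by
  have hsub : D.filter (fun c => ¬ G.Adj c u) ⊆ C \ G.neighborFinset u := fun c hc => by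
    rw [mem_filter] at hc
    exact mem_sdiff.2 ⟨hD hc.1, fun h => hc.2 ((G.mem_neighborFinset u c).1 h).symm⟩
  have hsplit : ((C \ G.neighborFinset u).card : ℝ) + (G.neighborFinset u ∩ C).card = C.card := by
    rw [inter_comm]; exact_mod_cast card_sdiff_add_card_inter C (G.neighborFinset u)
  have hcard : ((D.filter (fun c => ¬ G.Adj c u)).card : ℝ) ≤ (C \ G.neighborFinset u).card :=
    mod_cast card_le_card hsub
  linarith

lemma sum_card_filter_nonadj_le (hD : D ⊆ C) (hε' : 0 ≤ ε')
    (hgood : ∀ u ∈ S \ C, u ∉ W → (1 - ε') * C.card ≤ ((G.neighborFinset u ∩ C).card : ℝ)) :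
    ∑ c ∈ D, (((S \ C).filter (fun u => ¬ G.Adj c u)).card : ℝ)
      ≤ S.card * (ε' * C.card) + W.card * D.card := by
  have hswap : ∑ c ∈ D, (((S \ C).filter (fun u => ¬ G.Adj c u)).card : ℝ)
      = ∑ u ∈ S \ C, ((D.filter (fun c => ¬ G.Adj c u)).card : ℝ) := by
    exact_mod_cast sum_card_bipartiteAbove_eq_sum_card_bipartiteBelow (fun c u => ¬ G.Adj c u)
  rw [hswap, ← sum_filter_add_sum_filter_not (S \ C) (· ∉ W)]
  gcongr
  · calc _ ≤ ((S \ C).filter (· ∉ W)).card • (ε' * C.card) :=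
          sum_le_card_nsmul _ _ _ fun u hu =>
            card_filter_nonadj_le hD (hgood u (mem_filter.1 hu).1 (mem_filter.1 hu).2)
      _ ≤ S.card * (ε' * C.card) := by
          rw [nsmul_eq_mul]
          gcongr
          exact (filter_subset _ _).trans sdiff_subset
  · calc _ ≤ ((S \ C).filter (fun u => ¬ u ∉ W)).card • (D.card : ℝ) :=
          sum_le_card_nsmul _ _ _ fun u _ => mod_cast card_filter_le D _
      _ ≤ W.card * D.card := by
          rw [nsmul_eq_mul]
          gcongr
          exact fun u hu => not_not.1 (mem_filter.1 hu).2

lemma mul_card_le_of_many_nonadj (hε : 0 ≤ ε) (hε1 : ε ≤ 1 / 2) (hε' : ε' ≤ ε ^ 2 / 12)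
    (h2 : 2 ≤ ε' * C.card) (hD : D ⊆ C) (hS : (S.card : ℝ) < 2 * X)
    (hCS : (1 - ε) * C.card ≤ ((C ∩ S).card : ℝ))
    (hnonadj : ∀ c ∈ D, ε / 2 * X - 1 ≤ (((S \ C).filter (fun u => ¬ G.Adj c u)).card : ℝ))
    (hgood : ∀ u ∈ S \ C, u ∉ W → (1 - ε') * C.card ≤ ((G.neighborFinset u ∩ C).card : ℝ))
    (hW : (W.card : ℝ) ≤ ε' * C.card) :
    ε * D.card ≤ 8 * (ε' * C.card) := by
  have hε'0 : 0 ≤ ε' := by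
    by_contra! h
    nlinarith [(C.card.cast_nonneg : (0 : ℝ) ≤ C.card)]
  have hCS' : ((C ∩ S).card : ℝ) ≤ S.card := mod_cast card_le_card inter_subset_right
  have hCX : (C.card : ℝ) ≤ 4 * X := by nlinarith [(C.card.cast_nonneg : (0 : ℝ) ≤ C.card)]
  have hcount : D.card * (ε / 2 * X - 1) ≤ 2 * X * (ε' * C.card) + ε' * C.card * D.card := by
    calc D.card * (ε / 2 * X - 1) = D.card • (ε / 2 * X - 1) := (nsmul_eq_mul _ _).symm
      _ ≤ _ := card_nsmul_le_sum _ _ _ hnonadj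
      _ ≤ S.card * (ε' * C.card) + W.card * D.card := sum_card_filter_nonadj_le hD hε'0 hgood
      _ ≤ _ := by gcongr
  have hX : 0 < X := by linarith [(S.card.cast_nonneg : (0 : ℝ) ≤ S.card)]
  have hmargin : 1 + ε' * C.card ≤ ε / 4 * X := by
    have : ε' * C.card ≤ ε ^ 2 / 12 * (4 * X) := by gcongr
    nlinarith [mul_nonneg (mul_nonneg hε hX.le) (by linarith : (0 : ℝ) ≤ 1 / 2 - ε)]
  have hD0 : (0 : ℝ) ≤ D.card := D.card.cast_nonneg
  refine le_of_mul_le_mul_right ?_ hX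
  nlinarith [mul_le_mul_of_nonneg_left hmargin hD0]

section

variable {Vseq : ℕ → Finset V}

lemma antitone_of_removalStep (hstep : ∀ t, Vseq (t + 1) = removalStep G ε (Vseq t)) :
    Antitone Vseq :=
  antitone_nat_of_succ_le fun t => hstep t ▸ removalStep_subset

variable (hε : 0 ≤ ε) (hε1 : ε ≤ 1 / 2) (hε' : ε' ≤ ε ^ 2 / 12) (h2 : 2 ≤ ε' * C.card)
  (hC : G.IsClique (C : Set V))
  (hgood : ∀ u ∈ Vseq 0 \ C, u ∉ W → (1 - ε') * C.card ≤ ((G.neighborFinset u ∩ C).card : ℝ))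
  (hW : (W.card : ℝ) ≤ ε' * C.card)
  (hstep : ∀ t, Vseq (t + 1) = removalStep G ε (Vseq t))
include hε hε1 hε' h2 hC hgood hW hstep

lemma mul_card_removed_at_scale_le {t : ℕ} (ht : ((C \ Vseq t).card : ℝ) ≤ ε * C.card)
    {D : Finset V} (hD : D ⊆ C) {τ : V → ℕ}
    (hτ : ∀ c ∈ D, τ c ≤ t ∧ c ∈ Vseq (τ c) ∧ c ∉ Vseq (τ c + 1))
    {j : ℕ} (hj : ∀ c ∈ D, Nat.log 2 (Vseq (τ c)).card = j) :
    ε * D.card ≤ 8 * (ε' * C.card) := by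
  have hanti := antitone_of_removalStep hstep
  obtain rfl | hDne := D.eq_empty_or_nonempty
  · simp only [card_empty, Nat.cast_zero, mul_zero]
    linarith
  obtain ⟨c₀, hc₀, hmin⟩ := exists_min_image D τ hDne
  refine mul_card_le_of_many_nonadj (S := Vseq (τ c₀)) (X := 2 ^ j) hε hε1 hε' h2 hD ?_ ?_ ?_
    (fun u hu => hgood u (sdiff_subset_sdiff (hanti (Nat.zero_le _)) subset_rfl hu)) hW
  · have hlt := Nat.lt_pow_succ_log_self one_lt_two (Vseq (τ c₀)).card
    rw [hj c₀ hc₀, pow_succ] at hlt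
    rw [mul_comm]
    exact_mod_cast hlt
  · have hloss : ((C \ Vseq (τ c₀)).card : ℝ) ≤ (C \ Vseq t).card :=
      mod_cast card_le_card (sdiff_subset_sdiff subset_rfl (hanti (hτ c₀ hc₀).1))
    have hsplit : ((C ∩ Vseq (τ c₀)).card : ℝ) + (C \ Vseq (τ c₀)).card = C.card :=
      mod_cast card_inter_add_card_sdiff _ _
    linarith
  · intro c hc
    obtain ⟨-, hcin, hcout⟩ := hτ c hc
    have hsub := hanti (hmin c hc)
    have hscale : (2 : ℝ) ^ j ≤ (Vseq (τ c)).card := by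
      rw [← hj c hc]
      exact_mod_cast Nat.pow_log_le_self 2 (card_ne_zero_of_mem hcin)
    have hnonadj := le_card_nonadj_of_notMem_removalStep hC (hD hc) hcin (hstep _ ▸ hcout)
    have hmono : ((((Vseq (τ c) \ C).filter (fun u => ¬ G.Adj c u)).card : ℝ))
        ≤ ((Vseq (τ c₀) \ C).filter (fun u => ¬ G.Adj c u)).card :=
      mod_cast card_le_card (filter_subset_filter _ (sdiff_subset_sdiff hsub subset_rfl))
    nlinarith

lemma mul_card_sdiff_succ_le (hCV : C ⊆ Vseq 0) {t : ℕ}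
    (ht : ((C \ Vseq t).card : ℝ) ≤ ε * C.card) :
    ε * (C \ Vseq (t + 1)).card ≤ (Nat.log 2 (Vseq 0).card + 1) * (8 * (ε' * C.card)) := by
  have hanti := antitone_of_removalStep hstep
  have hτ : ∀ c ∈ C \ Vseq (t + 1), ∃ s, s ≤ t ∧ c ∈ Vseq s ∧ c ∉ Vseq (s + 1) := fun c hc =>
    Nat.exists_le_and_not_succ (p := (c ∈ Vseq ·)) (hCV (mem_sdiff.1 hc).1) (mem_sdiff.1 hc).2
  choose! τ hτ using hτ
  have hscale : ∀ c ∈ C \ Vseq (t + 1),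
      Nat.log 2 (Vseq (τ c)).card ∈ range (Nat.log 2 (Vseq 0).card + 1) := fun c _ =>
    mem_range.2 (Nat.lt_succ_of_le (Nat.log_mono_right (card_le_card (hanti (Nat.zero_le _)))))
  rw [card_eq_sum_card_fiberwise hscale, Nat.cast_sum, mul_sum]
  calc _ ≤ ∑ _j ∈ range (Nat.log 2 (Vseq 0).card + 1), 8 * (ε' * C.card) :=
        sum_le_sum fun j _ => mul_card_removed_at_scale_le hε hε1 hε' h2 hC hgood hW hstep ht
          ((filter_subset _ _).trans sdiff_subset) (fun c hc => hτ c (mem_filter.1 hc).1)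
          (fun c hc => (mem_filter.1 hc).2)
    _ = _ := by simp

end

lemma card_sdiff_le {Vseq : ℕ → Finset V} (hε : 0 < ε) (hε1 : ε ≤ 1 / 2)
    (hlog : 12 * (Nat.log 2 (Vseq 0).card + 1) * ε' ≤ ε ^ 2) (h2 : 2 ≤ ε' * C.card)
    (hC : G.IsClique (C : Set V)) (hCV : C ⊆ Vseq 0)
    (hgood : ∀ u ∈ Vseq 0 \ C, u ∉ W → (1 - ε') * C.card ≤ ((G.neighborFinset u ∩ C).card : ℝ))
    (hW : (W.card : ℝ) ≤ ε' * C.card)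
    (hstep : ∀ t, Vseq (t + 1) = removalStep G ε (Vseq t)) (t : ℕ) :
    ((C \ Vseq t).card : ℝ) ≤ ε * C.card := by
  have hC0 : (0 : ℝ) ≤ C.card := C.card.cast_nonneg
  have hε'0 : 0 ≤ ε' := by
    by_contra! h
    nlinarith
  have hε' : ε' ≤ ε ^ 2 / 12 := by
    have : (0 : ℝ) ≤ Nat.log 2 (Vseq 0).card := Nat.cast_nonneg _
    nlinarith
  induction t with
  | zero =>
    rw [sdiff_eq_empty_iff_subset.2 hCV, card_empty, Nat.cast_zero]
    positivity
  | succ t ih =>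
    have hloss := mul_card_sdiff_succ_le hε.le hε1 hε' h2 hC hgood hW hstep hCV ih
    refine le_of_mul_le_mul_left ?_ hε
    nlinarith [mul_le_mul_of_nonneg_right hlog hC0]

end RelaxedGap

open RelaxedGap in
theorem relaxed_gap_removal_process_general {V : Type*} [Fintype V] [DecidableEq V]
    (G : SimpleGraph V) [DecidableRel G.Adj]
    (ε : ℝ) (hε0 : 0 < ε) (hε1 : ε ≤ 1 / 2)
    (C : Finset V)
    (hclique : ∀ x ∈ C, ∀ y ∈ C, x ≠ y → G.Adj x y)
    (V₀ : Finset V) (hCV₀ : C ⊆ V₀)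
    (ε' : ℝ) (hε' : ε' = ε ^ 2 / (12 * (1 + Real.logb 2 (V₀.card : ℝ))))
    (hCsize : 2 / ε' ≤ (C.card : ℝ))
    (hW : (((V₀ \ C).filter (fun u =>
        ((G.neighborFinset u ∩ C).card : ℝ) < (1 - ε') * C.card)).card : ℝ) ≤ ε' * C.card)
    (Vseq : ℕ → Finset V) (hV0 : Vseq 0 = V₀)
    (hstep : ∀ t, Vseq (t + 1) =
      if ∃ v ∈ Vseq t, ((G.neighborFinset v ∩ Vseq t).card : ℝ) < (1 - ε) * (Vseq t).card
      then (Vseq t).filter (fun v =>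
        (1 - ε / 2) * (Vseq t).card ≤ ((G.neighborFinset v ∩ Vseq t).card : ℝ))
      else Vseq t) :
    ∃ N, (∀ t, N ≤ t → Vseq t = Vseq N) ∧
      (1 - ε) * C.card ≤ ((Vseq N ∩ C).card : ℝ) ∧
      ∀ v ∈ Vseq N, (1 - ε) * (Vseq N).card ≤ ((G.neighborFinset v ∩ Vseq N).card : ℝ) := by
  have hstep' : ∀ t, Vseq (t + 1) = removalStep G ε (Vseq t) := hstep
  subst hV0
  have hlogK : (Nat.log 2 (Vseq 0).card : ℝ) ≤ Real.logb 2 (Vseq 0).card := by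
    exact_mod_cast Real.natLog_le_logb (Vseq 0).card 2
  have hden : 0 < 12 * (1 + Real.logb 2 (Vseq 0).card) := by
    linarith [(Nat.cast_nonneg _ : (0 : ℝ) ≤ Nat.log 2 (Vseq 0).card)]
  have hε'0 : 0 < ε' := hε' ▸ div_pos (pow_pos hε0 2) hden
  have hlog : 12 * (Nat.log 2 (Vseq 0).card + 1) * ε' ≤ ε ^ 2 := by
    rw [hε', mul_div_assoc', div_le_iff₀ hden]
    nlinarith [mul_nonneg (sq_nonneg ε) (sub_nonneg.2 hlogK)]
  obtain ⟨N, hN⟩ := WellFoundedLT.antitone_chain_condition (antitone_of_removalStep hstep')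
  have hfix : removalStep G ε (Vseq N) = Vseq N := (hstep' N).symm.trans (hN _ N.le_succ).symm
  refine ⟨N, fun t ht => (hN t ht).symm, ?_,
    fun v hv => le_card_neighborFinset_inter_of_removalStep_eq_self hε0.le hfix hv⟩
  have hloss := card_sdiff_le hε0 hε1 hlog ((div_le_iff₀' hε'0).1 hCsize) hclique hCV₀
    (fun u hu huW => not_lt.1 fun h => huW (mem_filter.2 ⟨hu, h⟩)) hW hstep' N
  have hsplit : ((Vseq N ∩ C).card : ℝ) + (C \ Vseq N).card = C.card := by
    rw [inter_comm]
    exact_mod_cast card_inter_add_card_sdiff _ _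
  linarith

/-- The relaxed-gap theorem: starting from a superset `V₀` of a clique community `C` in which
all but at most `ε′|C|` of the non-community vertices know at least a `1 − ε′` fraction of
`C`, the iterated low-density-removal process stabilizes at a set `F` retaining a `1 − ε`
fraction of `C` and in which every vertex has density at least `1 − ε`. -/
theorem relaxed_gap_removal_process {V : Type*} [Fintype V] [DecidableEq V]
    (G : SimpleGraph V) [DecidableRel G.Adj]
    (ε : ℝ) (hε0 : 0 < ε) (hε1 : ε ≤ 1 / 2)
    (C : Finset V) (hCne : C.Nonempty)
    (hclique : ∀ x ∈ C, ∀ y ∈ C, x ≠ y → G.Adj x y)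
    (V₀ : Finset V) (hCV₀ : C ⊆ V₀)
    (ε' : ℝ) (hε' : ε' = ε ^ 2 / (12 * (1 + Real.logb 2 (V₀.card : ℝ))))
    (hCsize : 2 / ε' ≤ (C.card : ℝ))
    (hW : (((V₀ \ C).filter (fun u =>
        ((G.neighborFinset u ∩ C).card : ℝ) < (1 - ε') * C.card)).card : ℝ) ≤ ε' * C.card)
    (Vseq : ℕ → Finset V) (hV0 : Vseq 0 = V₀)
    (hstep : ∀ t, Vseq (t + 1) =
      if ∃ v ∈ Vseq t, ((G.neighborFinset v ∩ Vseq t).card : ℝ) < (1 - ε) * (Vseq t).card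
      then (Vseq t).filter (fun v =>
        (1 - ε / 2) * (Vseq t).card ≤ ((G.neighborFinset v ∩ Vseq t).card : ℝ))
      else Vseq t) :
    ∃ N, (∀ t, N ≤ t → Vseq t = Vseq N) ∧
      (1 - ε) * C.card ≤ ((Vseq N ∩ C).card : ℝ) ∧
      ∀ v ∈ Vseq N, (1 - ε) * (Vseq N).card ≤ ((G.neighborFinset v ∩ Vseq N).card : ℝ) :=
  relaxed_gap_removal_process_general G ε hε0 hε1 C hclique V₀ hCV₀ ε' hε' hCsize hW Vseq hV0 hstep
end
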